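/- For Θ ∈ ℝ let a(Θ) be the 2×2 real matrix [[1/2 + (3/2)sin²(Θ/2), −(3/4)sin Θ], [−(3/4)sin Θ, 1/2 + (3/2)cos²(Θ/2)]], and set a_n = a(Θ) for n ≥ 0 and a_n = a(0) = diag(1/2, 2) for n < 0. Then the linear difference equation x_{n+1} = a_n x_n, n ∈ ℤ, has a nonzero solution x ∈ c₀(ℝ²) if and only if Θ ∈ π + 2πℤ (equivalently, cos(Θ/2) = 0). -/
import Mathlib


open Filter Matrix

noncomputable section

/-- The space `c₀(ℝ²)` of two-sided sequences in `ℝ²` vanishing at `±∞`, with sup norm. -/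
abbrev c0two := ZeroAtInftyContinuousMap ℤ (Fin 2 → ℝ)

/-- The matrix `a(Θ)` of the example in Section 6. -/
def aMat (Θ : ℝ) : Matrix (Fin 2) (Fin 2) ℝ :=
  !![1/2 + 3/2 * Real.sin (Θ/2) ^ 2, -(3/4) * Real.sin Θ;
     -(3/4) * Real.sin Θ, 1/2 + 3/2 * Real.cos (Θ/2) ^ 2]

lemma mulVec0 (M : Matrix (Fin 2) (Fin 2) ℝ) (y : Fin 2 → ℝ) :
    M.mulVec y 0 = M 0 0 * y 0 + M 0 1 * y 1 := by
  simp [Matrix.mulVec, dotProduct, Fin.sum_univ_two]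

lemma mulVec1 (M : Matrix (Fin 2) (Fin 2) ℝ) (y : Fin 2 → ℝ) :
    M.mulVec y 1 = M 1 0 * y 0 + M 1 1 * y 1 := by
  simp [Matrix.mulVec, dotProduct, Fin.sum_univ_two]

lemma aMat00 (Θ : ℝ) : aMat Θ 0 0 = 1/2 + 3/2 * Real.sin (Θ/2) ^ 2 := rfl
lemma aMat01 (Θ : ℝ) : aMat Θ 0 1 = -(3/4) * Real.sin Θ := rfl
lemma aMat10 (Θ : ℝ) : aMat Θ 1 0 = -(3/4) * Real.sin Θ := rfl
lemma aMat11 (Θ : ℝ) : aMat Θ 1 1 = 1/2 + 3/2 * Real.cos (Θ/2) ^ 2 := rfl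

lemma zero00 : aMat 0 0 0 = 1/2 := by rw [aMat00]; norm_num
lemma zero01 : aMat 0 0 1 = 0 := by rw [aMat01]; norm_num
lemma zero10 : aMat 0 1 0 = 0 := by rw [aMat10]; norm_num
lemma zero11 : aMat 0 1 1 = 2 := by rw [aMat11]; norm_num

lemma natAbs_tendsto : Tendsto Int.natAbs (cocompact ℤ) atTop := by
  rw [cocompact_eq_cofinite]
  refine tendsto_atTop.2 fun b => ?_
  rw [eventually_cofinite]
  apply (Set.finite_Icc (-(b:ℤ)) (b:ℤ)).subset
  intro n hn
  simp only [Set.mem_setOf_eq, not_le] at hn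
  simp only [Set.mem_Icc]
  omega

/-- The linear difference equation `xₙ₊₁ = aₙ xₙ` with `aₙ = a(Θ)` for `n ≥ 0` and
`aₙ = a(0) = diag(1/2,2)` for `n < 0` has a nonzero solution in `c₀(ℝ²)` if and only
if `Θ ∈ π + 2πℤ`. -/
theorem nonzero_solution_iff (Θ : ℝ) :
    (∃ x : c0two, x ≠ 0 ∧
      ∀ n : ℤ, x (n + 1) = (if 0 ≤ n then aMat Θ else aMat 0).mulVec (x n)) ↔
    ∃ k : ℤ, Θ = Real.pi + 2 * Real.pi * k := by
  constructor
  · rintro ⟨x, hx0, hrec⟩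
    set s := Real.sin (Θ/2) with hs
    set c := Real.cos (Θ/2) with hc
    have pyth : s ^ 2 + c ^ 2 = 1 := Real.sin_sq_add_cos_sq _
    have hsinΘ : Real.sin Θ = 2 * s * c := by
      rw [hs, hc, ← Real.sin_two_mul]; ring_nf
    -- recurrences for n < 0
    have hneg : ∀ n : ℤ, n < 0 → x (n+1) 0 = 1/2 * x n 0 ∧ x (n+1) 1 = 2 * x n 1 := by
      intro n hn
      have h := hrec n
      rw [if_neg (by omega)] at h
      constructor
      · rw [h, mulVec0, zero00, zero01]; ring
      · rw [h, mulVec1, zero10, zero11]; ring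
    -- recurrences for n ≥ 0
    have hpos : ∀ n : ℤ, 0 ≤ n →
        x (n+1) 0 = (1/2 + 3/2 * s^2) * x n 0 + (-(3/4) * (2*s*c)) * x n 1 ∧
        x (n+1) 1 = (-(3/4) * (2*s*c)) * x n 0 + (1/2 + 3/2 * c^2) * x n 1 := by
      intro n hn
      have h := hrec n
      rw [if_pos hn] at h
      constructor
      · rw [h, mulVec0, aMat00, aMat01, hsinΘ]
      · rw [h, mulVec1, aMat10, aMat11, hsinΘ]
    -- tendsto facts
    have hT : Tendsto (⇑x) (cocompact ℤ) (nhds 0) := zero_at_infty x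
    rw [cocompact_eq_atBot_atTop, tendsto_sup] at hT
    obtain ⟨hbot, htop⟩ := hT
    have hbot0 : Tendsto (fun n : ℤ => x n 0) atBot (nhds 0) := by
      have := tendsto_pi_nhds.1 hbot 0
      simpa using this
    have htop0 : Tendsto (fun n : ℤ => x n 0) atTop (nhds 0) := by
      have := tendsto_pi_nhds.1 htop 0
      simpa using this
    have htop1 : Tendsto (fun n : ℤ => x n 1) atTop (nhds 0) := by
      have := tendsto_pi_nhds.1 htop 1
      simpa using this
    -- backward: x (-m) 0 = 2^m * x 0 0
    have hback : ∀ m : ℕ, x (-(m:ℤ)) 0 = 2^m * x 0 0 := by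
      intro m
      induction m with
      | zero => norm_num
      | succ m ih =>
        have h := (hneg (-(m:ℤ)-1) (by omega)).1
        have e : (-(m:ℤ)-1) + 1 = -(m:ℤ) := by ring
        rw [e] at h
        have e2 : (-(↑(m+1):ℤ)) = -(m:ℤ)-1 := by push_cast; ring
        rw [e2]
        have : x (-(m:ℤ)-1) 0 = 2 * x (-(m:ℤ)) 0 := by linarith [h]
        rw [this, ih]; ring
    -- x 0 0 = 0
    have hnegseq : Tendsto (fun m : ℕ => x (-(m:ℤ)) 0) atTop (nhds 0) := by
      apply hbot0.comp
      exact (tendsto_neg_atBot_iff.2 tendsto_natCast_atTop_atTop)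
    have hx00 : x 0 0 = 0 := by
      by_contra hne
      have hge : ∀ m : ℕ, |x 0 0| ≤ |x (-(m:ℤ)) 0| := by
        intro m
        rw [hback m, abs_mul, abs_pow, abs_two]
        nlinarith [abs_nonneg (x 0 0), one_le_pow₀ (one_le_two (α := ℝ)) (n := m)]
      have habs : Tendsto (fun m : ℕ => |x (-(m:ℤ)) 0|) atTop (nhds 0) := by
        simpa using hnegseq.abs
      have := ge_of_tendsto' habs hge
      have := abs_nonneg (x 0 0)
      have : |x 0 0| = 0 := le_antisymm ‹|x 0 0| ≤ 0› ‹0 ≤ |x 0 0|›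
      exact hne (abs_eq_zero.1 this)
    -- forward: β
    set β : ℤ → ℝ := fun n => s * x n 0 - c * x n 1 with hβ
    have hβstep : ∀ n : ℤ, 0 ≤ n → β (n+1) = 2 * β n := by
      intro n hn
      obtain ⟨h1, h2⟩ := hpos n hn
      simp only [hβ, h1, h2]
      linear_combination (3/2 * (s * x n 0 - c * x n 1)) * pyth
    have hfwd : ∀ m : ℕ, β (m:ℤ) = 2^m * β 0 := by
      intro m
      induction m with
      | zero => norm_num
      | succ m ih =>
        have h := hβstep (m:ℤ) (by positivity)
        push_cast
        rw [h, ih]; ring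
    have hβtop : Tendsto (fun m : ℕ => β (m:ℤ)) atTop (nhds 0) := by
      have : Tendsto β atTop (nhds 0) := by
        have := (htop0.const_mul s).sub (htop1.const_mul c)
        simpa [hβ] using this
      exact this.comp tendsto_natCast_atTop_atTop
    have hβ0 : β 0 = 0 := by
      by_contra hne
      have hge : ∀ m : ℕ, |β 0| ≤ |β (m:ℤ)| := by
        intro m
        rw [hfwd m, abs_mul, abs_pow, abs_two]
        nlinarith [abs_nonneg (β 0), one_le_pow₀ (one_le_two (α := ℝ)) (n := m)]
      have habs : Tendsto (fun m : ℕ => |β (m:ℤ)|) atTop (nhds 0) := by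
        simpa using hβtop.abs
      have h1 := ge_of_tendsto' habs hge
      have h2 := abs_nonneg (β 0)
      exact hne (abs_eq_zero.1 (le_antisymm h1 h2))
    -- x 0 1 ≠ 0
    have hx01 : x 0 1 ≠ 0 := by
      intro hz
      apply hx0
      have key : ∀ m : ℕ, (x (m:ℤ) 0 = 0 ∧ x (m:ℤ) 1 = 0) ∧
          (x (-(m:ℤ)) 0 = 0 ∧ x (-(m:ℤ)) 1 = 0) := by
        intro m
        induction m with
        | zero => simp [hx00, hz]
        | succ m ih =>
          obtain ⟨⟨f0, f1⟩, ⟨b0, b1⟩⟩ := ih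
          refine ⟨?_, ?_⟩
          · obtain ⟨h1, h2⟩ := hpos (m:ℤ) (by positivity)
            push_cast
            rw [h1, h2, f0, f1]
            norm_num
          · obtain ⟨h1, h2⟩ := hneg (-(m:ℤ)-1) (by omega)
            have e : (-(m:ℤ)-1) + 1 = -(m:ℤ) := by ring
            rw [e, b0] at h1
            rw [e, b1] at h2
            have e2 : (-(↑(m+1):ℤ)) = -(m:ℤ)-1 := by push_cast [Nat.cast_add]; ring
            rw [e2]
            constructor <;> linarith
      ext n i
      rcases Int.eq_nat_or_neg n with ⟨m, rfl | rfl⟩ <;> fin_cases i <;>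
        simp [(key m).1.1, (key m).1.2, (key m).2.1, (key m).2.2]
    -- conclude c = 0
    have hc0 : c = 0 := by
      have : s * x 0 0 - c * x 0 1 = 0 := hβ0
      rw [hx00] at this
      have : c * x 0 1 = 0 := by linarith
      rcases mul_eq_zero.1 this with h | h
      · exact h
      · exact absurd h hx01
    obtain ⟨k, hk⟩ := Real.cos_eq_zero_iff.1 (hc ▸ hc0)
    exact ⟨k, by linarith⟩
  · rintro ⟨k, rfl⟩
    set Θ := Real.pi + 2 * Real.pi * k with hΘ
    have hsinΘ : Real.sin Θ = 0 := by
      rw [hΘ, show Real.pi + 2 * Real.pi * k = Real.pi + (k:ℤ) * (2*Real.pi) by ring,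
        Real.sin_add_int_mul_two_pi, Real.sin_pi]
    have hcos : Real.cos (Θ/2) = 0 := by
      rw [Real.cos_eq_zero_iff]
      exact ⟨k, by rw [hΘ]; ring⟩
    have hsin2 : Real.sin (Θ/2) ^ 2 = 1 := by
      have := Real.sin_sq_add_cos_sq (Θ/2)
      rw [hcos] at this
      nlinarith
    have hm00 : aMat Θ 0 0 = 2 := by rw [aMat00, hsin2]; norm_num
    have hm01 : aMat Θ 0 1 = 0 := by rw [aMat01, hsinΘ]; norm_num
    have hm10 : aMat Θ 1 0 = 0 := by rw [aMat10, hsinΘ]; norm_num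
    have hm11 : aMat Θ 1 1 = 1/2 := by rw [aMat11, hcos]; norm_num
    refine ⟨⟨⟨fun n => ![0, (2:ℝ)^(-|n|)], continuous_of_discreteTopology⟩, ?_⟩, ?_, ?_⟩
    · -- zero at infty
      have he : ∀ n : ℤ, (2:ℝ)^(-|n|) = (1/2:ℝ)^n.natAbs := by
        intro n
        rw [Int.abs_eq_natAbs, _root_.zpow_neg, zpow_natCast, one_div, inv_pow]
      have htend : Tendsto (fun n : ℤ => (2:ℝ)^(-|n|)) (cocompact ℤ) (nhds 0) := by
        have h := (tendsto_pow_atTop_nhds_zero_of_lt_one (by norm_num : (0:ℝ) ≤ 1/2)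
          (by norm_num)).comp natAbs_tendsto
        exact h.congr fun n => (he n).symm
      rw [tendsto_pi_nhds]
      intro i
      fin_cases i
      · show Tendsto (fun n : ℤ => (0:ℝ)) (cocompact ℤ) (nhds 0)
        exact tendsto_const_nhds
      · show Tendsto (fun n : ℤ => (2:ℝ)^(-|n|)) (cocompact ℤ) (nhds 0)
        exact htend
    · -- nonzero
      intro h
      have h0 := DFunLike.congr_fun h 0
      have := congrFun h0 1
      simp at this
    · -- recurrence
      intro n
      rcases le_or_gt 0 n with hn | hn
      · rw [if_pos hn]
        have e1 : |n+1| = |n| + 1 := by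
          rw [abs_of_nonneg hn, abs_of_nonneg (by omega : (0:ℤ) ≤ n+1)]
        have e2 : (2:ℝ)^(-(|n|+1)) = 1/2 * (2:ℝ)^(-|n|) := by
          rw [show -(|n|+1) = -|n| + (-1) by ring, zpow_add₀ (by norm_num : (2:ℝ) ≠ 0)]
          norm_num
          ring
        funext i
        fin_cases i
        · show (0:ℝ) = (aMat Θ).mulVec ![0, (2:ℝ)^(-|n|)] 0
          rw [mulVec0, hm00, hm01]
          simp
        · show (2:ℝ)^(-|n+1|) = (aMat Θ).mulVec ![0, (2:ℝ)^(-|n|)] 1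
          rw [mulVec1, hm10, hm11, e1, e2]
          simp
      · rw [if_neg (by omega)]
        have e1 : |n+1| = |n| - 1 := by
          rw [abs_of_nonpos (by omega : n ≤ 0), abs_of_nonpos (by omega : n+1 ≤ 0)]
          ring
        have e2 : (2:ℝ)^(-(|n|-1)) = 2 * (2:ℝ)^(-|n|) := by
          rw [show -(|n|-1) = -|n| + 1 by ring, zpow_add₀ (by norm_num : (2:ℝ) ≠ 0)]
          norm_num
          ring
        funext i
        fin_cases i
        · show (0:ℝ) = (aMat 0).mulVec ![0, (2:ℝ)^(-|n|)] 0
          rw [mulVec0, zero00, zero01]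
          simp
        · show (2:ℝ)^(-|n+1|) = (aMat 0).mulVec ![0, (2:ℝ)^(-|n|)] 1
          rw [mulVec1, zero10, zero11, e1, e2]
          simp

end
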